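/- Cultural soundness: if Φ ⇝_𝒞 Ψ is a single rewrite step by one of the cultural rules 𝒞 = {grow, crop, pull, glue, apis, apet}, then Ψ semantically entails Φ: Ψ ⊨ Φ. -/
import Mathlib


/-! # The flower calculus (Donato), common definitions

Flowers and gardens over a first-order signature `(P, ar)` and variables `V`.
Finite multisets are represented as lists. -/

namespace Flowers

mutual
/-- Flowers: atoms `p(x⃗)` or `γ ⫐ Δ` with pistil `γ` and petals `Δ`. -/
inductive Flower (V P : Type) (ar : P → ℕ) : Type where
  | atom (p : P) (args : Fin (ar p) → V) : Flower V P ar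
  | flw (pistil : Garden V P ar) (petals : List (Garden V P ar)) : Flower V P ar
/-- Gardens: a finite set of binders together with a bouquet of flowers. -/
inductive Garden (V P : Type) (ar : P → ℕ) : Type where
  | mk (binders : List V) (content : List (Flower V P ar)) : Garden V P ar
end

/-- A bouquet is a finite multiset of flowers. -/
abbrev Bouquet (V P : Type) (ar : P → ℕ) := List (Flower V P ar)

variable {V P : Type} [DecidableEq V] {ar : P → ℕ}

def Garden.binders : Garden V P ar → List V
  | .mk xs _ => xs

def Garden.content : Garden V P ar → List (Flower V P ar)
  | .mk _ Φ => Φ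

/-! ## Substitutions -/

/-- The support of a substitution `σ : V → V`. -/
def Supp (σ : V → V) : Set V := {x | σ x ≠ x}

/-- Restriction of a substitution away from a list of (re)bound variables. -/
def restrict (σ : V → V) (xs : List V) : V → V := fun x => if x ∈ xs then x else σ x

mutual
/-- Action of a substitution on a flower. -/
def applyF (σ : V → V) : Flower V P ar → Flower V P ar
  | .atom p args => .atom p (σ ∘ args)
  | .flw (.mk xs Φ) Δ =>
      .flw (.mk xs (applyL (restrict σ xs) Φ)) (applyP (restrict σ xs) Δ)
/-- Action of a substitution on a bouquet. -/
def applyL (σ : V → V) : List (Flower V P ar) → List (Flower V P ar)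
  | [] => []
  | φ :: Φ => applyF σ φ :: applyL σ Φ
/-- Action of a substitution on a corolla (list of gardens). -/
def applyP (σ : V → V) : List (Garden V P ar) → List (Garden V P ar)
  | [] => []
  | .mk ys Ψ :: Δ => .mk ys (applyL (restrict σ ys) Ψ) :: applyP σ Δ
end

/-- Action of a substitution on a garden. -/
def applyG (σ : V → V) : Garden V P ar → Garden V P ar
  | .mk xs Φ => .mk xs (applyL (restrict σ xs) Φ)

mutual
/-- Bound variables of a flower. -/
def bvF : Flower V P ar → List V
  | .atom _ _ => []
  | .flw γ Δ => bvG γ ++ bvP Δ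
/-- Bound variables of a garden. -/
def bvG : Garden V P ar → List V
  | .mk xs Φ => xs ++ bvL Φ
/-- Bound variables of a bouquet. -/
def bvL : List (Flower V P ar) → List V
  | [] => []
  | φ :: Φ => bvF φ ++ bvL Φ
/-- Bound variables of a corolla. -/
def bvP : List (Garden V P ar) → List V
  | [] => []
  | γ :: Δ => bvG γ ++ bvP Δ
end

/-- `σ` is capture-avoiding in a bouquet `Φ`: `σ(dom σ) ∩ bv(Φ) = ∅`. -/
def CaptAvoid (σ : V → V) (Φ : Bouquet V P ar) : Prop :=
  ∀ x, σ x ≠ x → σ x ∉ bvL Φ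

/-! ## Contexts -/

/-- Contexts: a bouquet with exactly one hole, which may occur at top level,
inside the pistil, or inside a petal of a flower. -/
inductive Ctx (V P : Type) (ar : P → ℕ) : Type where
  | hole (Ψ : List (Flower V P ar)) : Ctx V P ar
  | pistil (Ψ : List (Flower V P ar)) (xs : List V) (c : Ctx V P ar)
      (Δ : List (Garden V P ar)) : Ctx V P ar
  | petal (Ψ : List (Flower V P ar)) (γ : Garden V P ar) (xs : List V) (c : Ctx V P ar)
      (Δ : List (Garden V P ar)) : Ctx V P ar

/-- Filling the hole of a context with a bouquet. -/
def Ctx.fill : Ctx V P ar → Bouquet V P ar → Bouquet V P ar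
  | .hole Ψ, Φ => Ψ ++ Φ
  | .pistil Ψ xs c Δ, Φ => Ψ ++ [.flw (.mk xs (c.fill Φ)) Δ]
  | .petal Ψ γ xs c Δ, Φ => Ψ ++ [.flw γ (.mk xs (c.fill Φ) :: Δ)]

/-- Adjoining a bouquet at the top level of a context. -/
def Ctx.prepend (Φ : Bouquet V P ar) : Ctx V P ar → Ctx V P ar
  | .hole Ψ => .hole (Φ ++ Ψ)
  | .pistil Ψ xs c Δ => .pistil (Φ ++ Ψ) xs c Δ
  | .petal Ψ γ xs c Δ => .petal (Φ ++ Ψ) γ xs c Δ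

/-- Filling the hole of a context with another context. -/
def Ctx.fillCtx : Ctx V P ar → Ctx V P ar → Ctx V P ar
  | .hole Ψ, c' => c'.prepend Ψ
  | .pistil Ψ xs c Δ, c' => .pistil Ψ xs (c.fillCtx c') Δ
  | .petal Ψ γ xs c Δ, c' => .petal Ψ γ xs (c.fillCtx c') Δ

/-- Number of inversions (pistils enclosing the hole) of a context. -/
def Ctx.inv : Ctx V P ar → ℕ
  | .hole _ => 0
  | .pistil _ _ c _ => 1 + c.inv
  | .petal _ _ _ c _ => c.inv

def Ctx.Positive (Ξ : Ctx V P ar) : Prop := Even Ξ.inv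
def Ctx.Negative (Ξ : Ctx V P ar) : Prop := ¬ Even Ξ.inv

/-! ## Pollination -/

/-- A flower `φ` can be pollinated in a context `Ξ`. -/
def PollinatedF (φ : Flower V P ar) (Ξ : Ctx V P ar) : Prop :=
  ∃ (Ψ : Bouquet V P ar), φ ∈ Ψ ∧ ∃ (Ξ' Ξ₀ : Ctx V P ar),
    (Ξ = Ξ'.fillCtx (Ξ₀.prepend Ψ)) ∨
    (∃ (xs ys : List V) (Δ : List (Garden V P ar)),
      Ξ = Ξ'.fillCtx (Ctx.petal [] (.mk xs Ψ) ys Ξ₀ Δ))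

/-- A bouquet can be pollinated in `Ξ` if each of its flowers can. -/
def Pollinated (Φ : Bouquet V P ar) (Ξ : Ctx V P ar) : Prop :=
  ∀ φ ∈ Φ, PollinatedF φ Ξ

/-! ## Rules. A step `Φ ⇝ Ψ` has conclusion `Φ` and premiss `Ψ`
(backward / bottom-up reading). -/

/-- Shallow natural steps: instances of the natural rules 𝒩 in the empty context. -/
inductive NShallow : Bouquet V P ar → Bouquet V P ar → Prop where
  | polld (Ξ : Ctx V P ar) (Φ : Bouquet V P ar) (h : Pollinated Φ Ξ) :
      NShallow (Ξ.fill Φ) (Ξ.fill [])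
  | pollu (Ξ : Ctx V P ar) (Φ : Bouquet V P ar) (h : Pollinated Φ Ξ) :
      NShallow (Ξ.fill []) (Ξ.fill Φ)
  | epis (Φ : Bouquet V P ar) :
      NShallow [.flw (.mk [] []) [.mk [] Φ]] Φ
  | epet (γ : Garden V P ar) (Δ₁ Δ₂ : List (Garden V P ar)) :
      NShallow [.flw γ (Δ₁ ++ .mk [] [] :: Δ₂)] []
  | srep (xs : List V) (Φ₁ Φ₂ : List (Flower V P ar)) (γs Δ : List (Garden V P ar)) :
      NShallow [.flw (.mk xs (Φ₁ ++ .flw (.mk [] []) γs :: Φ₂)) Δ]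
        [.flw (.mk xs (Φ₁ ++ Φ₂)) [.mk [] (γs.map (fun γ => .flw γ Δ))]]
  | ipis (xs ys : List V) (Φ : List (Flower V P ar)) (Δ : List (Garden V P ar))
      (σ : V → V) (hsupp : Supp σ = {x | x ∈ ys})
      (hca : CaptAvoid σ [.flw (.mk [] Φ) Δ]) :
      NShallow [.flw (.mk (xs ++ ys) Φ) Δ]
        [.flw (.mk xs (applyL σ Φ)) (applyP σ Δ), .flw (.mk (xs ++ ys) Φ) Δ]
  | ipet (γ : Garden V P ar) (xs ys : List V) (Φ : List (Flower V P ar))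
      (Δ₁ Δ₂ : List (Garden V P ar)) (σ : V → V) (hsupp : Supp σ = {x | x ∈ ys})
      (hca : CaptAvoid σ Φ) :
      NShallow [.flw γ (Δ₁ ++ .mk (xs ++ ys) Φ :: Δ₂)]
        [.flw γ (Δ₁ ++ .mk xs (applyL σ Φ) :: .mk (xs ++ ys) Φ :: Δ₂)]

/-- Natural steps: shallow natural steps closed under arbitrary contexts. -/
def NStep (Φ Ψ : Bouquet V P ar) : Prop :=
  ∃ (Ξ : Ctx V P ar) (Φ₀ Ψ₀ : Bouquet V P ar),
    NShallow Φ₀ Ψ₀ ∧ Φ = Ξ.fill Φ₀ ∧ Ψ = Ξ.fill Ψ₀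

/-- Cultural steps, applying in positive or negative contexts. -/
inductive CStep : Bouquet V P ar → Bouquet V P ar → Prop where
  | grow (Ξ : Ctx V P ar) (hΞ : Ξ.Positive) (Φ : Bouquet V P ar) :
      CStep (Ξ.fill []) (Ξ.fill Φ)
  | crop (Ξ : Ctx V P ar) (hΞ : Ξ.Negative) (Φ : Bouquet V P ar) :
      CStep (Ξ.fill Φ) (Ξ.fill [])
  | pull (Ξ : Ctx V P ar) (hΞ : Ξ.Positive) (γ : Garden V P ar)
      (Γ Δ : List (Garden V P ar)) :
      CStep (Ξ.fill [.flw γ (Γ ++ Δ)]) (Ξ.fill [.flw γ Δ])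
  | glue (Ξ : Ctx V P ar) (hΞ : Ξ.Negative) (γ : Garden V P ar)
      (Γ Δ : List (Garden V P ar)) :
      CStep (Ξ.fill [.flw γ Δ]) (Ξ.fill [.flw γ (Γ ++ Δ)])
  | apis (Ξ : Ctx V P ar) (hΞ : Ξ.Positive) (xs ys : List V)
      (Φ : List (Flower V P ar)) (Δ : List (Garden V P ar)) (σ : V → V)
      (hsupp : Supp σ = {x | x ∈ ys}) (hca : CaptAvoid σ [.flw (.mk [] Φ) Δ]) :
      CStep (Ξ.fill [.flw (.mk xs (applyL σ Φ)) (applyP σ Δ)])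
        (Ξ.fill [.flw (.mk (xs ++ ys) Φ) Δ])
  | apet (Ξ : Ctx V P ar) (hΞ : Ξ.Negative) (γ : Garden V P ar) (xs ys : List V)
      (Φ : List (Flower V P ar)) (Δ : List (Garden V P ar)) (σ : V → V)
      (hsupp : Supp σ = {x | x ∈ ys}) (hca : CaptAvoid σ Φ) :
      CStep (Ξ.fill [.flw γ (.mk xs (applyL σ Φ) :: Δ)])
        (Ξ.fill [.flw γ (.mk (xs ++ ys) Φ :: Δ)])

/-- A step in the full flower calculus 𝒩 ∪ 𝒞. -/
def Step (Φ Ψ : Bouquet V P ar) : Prop := NStep Φ Ψ ∨ CStep Φ Ψ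

/-- Derivations: finite sequences of rewrite steps. -/
def Deriv (R : Bouquet V P ar → Bouquet V P ar → Prop) :
    Bouquet V P ar → Bouquet V P ar → Prop :=
  Relation.ReflTransGen R

/-- Hypothetical provability `Ψ ⊢_R Φ`. -/
def HypProv (R : Bouquet V P ar → Bouquet V P ar → Prop) (Ψ Φ : Bouquet V P ar) : Prop :=
  ∀ Ξ : Ctx V P ar, Pollinated Ψ Ξ → Deriv R (Ξ.fill Φ) (Ξ.fill [])

/-! ## Theories -/

/-- Provability of a bouquet from a theory (in the natural fragment). -/
def TDerives (T : Set (Flower V P ar)) (Φ : Bouquet V P ar) : Prop :=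
  ∃ Ψ : Bouquet V P ar, (∀ φ ∈ Ψ, φ ∈ T) ∧ HypProv NStep Ψ Φ

/-- `ψ`-consistency of a theory. -/
def PsiConsistent (ψ : Flower V P ar) (T : Set (Flower V P ar)) : Prop :=
  ¬ TDerives T [ψ]

/-- `ψ`-completeness of a theory. -/
def PsiComplete (ψ : Flower V P ar) (T : Set (Flower V P ar)) : Prop :=
  ∀ φ : Flower V P ar, TDerives (insert φ T) [ψ] ∨ φ ∈ T

/-! ## Kripke semantics -/

/-- Kripke structures over the signature `(P, ar)`, with monotone domains `M w`
inside an ambient type `D` and monotone interpretations. -/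
structure Kripke (V P : Type) (ar : P → ℕ) where
  W : Type
  D : Type
  le : W → W → Prop
  le_refl : ∀ w, le w w
  le_trans : ∀ {a b c}, le a b → le b c → le a c
  M : W → Set D
  M_nonempty : ∀ w, (M w).Nonempty
  interp : (p : P) → W → Set (Fin (ar p) → D)
  interp_dom : ∀ p w f, f ∈ interp p w → ∀ i, f i ∈ M w
  M_mono : ∀ {w w'}, le w w' → M w ⊆ M w'
  interp_mono : ∀ (p : P) {w w'}, le w w' → interp p w ⊆ interp p w'

/-- `e` is a `w`-valuation. -/
def Kripke.IsVal (K : Kripke V P ar) (w : K.W) (e : V → K.D) : Prop :=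
  ∀ x, e x ∈ K.M w

/-- Update of a valuation on a set of variables: `e⟨xs ↦ e'⟩`. -/
def upd {D : Type} (e : V → D) (xs : List V) (e' : V → D) : V → D :=
  fun x => if x ∈ xs then e' x else e x

mutual
/-- Forcing of a flower: `w ⊩ φ[e]`. -/
def forcesF (K : Kripke V P ar) (w : K.W) (e : V → K.D) : Flower V P ar → Prop
  | .atom p args => (fun i => e (args i)) ∈ K.interp p w
  | .flw (.mk xs Φ) Δ =>
      ∀ w', K.le w w' → ∀ e' : V → K.D, K.IsVal w' e' →
        forcesL K w' (upd e xs e') Φ → forcesP K w' (upd e xs e') Δ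
/-- Forcing of a bouquet: each of its flowers is forced. -/
def forcesL (K : Kripke V P ar) (w : K.W) (e : V → K.D) : List (Flower V P ar) → Prop
  | [] => True
  | φ :: Φ => forcesF K w e φ ∧ forcesL K w e Φ
/-- Forcing of the petals: some petal has its content forced for some valuation
of its binders. -/
def forcesP (K : Kripke V P ar) (w : K.W) (e : V → K.D) : List (Garden V P ar) → Prop
  | [] => False
  | .mk ys Ψ :: Δ =>
      (∃ e'' : V → K.D, K.IsVal w e'' ∧ forcesL K w (upd e ys e'') Ψ) ∨ forcesP K w e Δ
end

/-- Semantic entailment `Φ ⊨ Ψ`: in every Kripke structure, every world and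
valuation forcing `Φ` forces `Ψ`. -/
def SemEntails (Φ Ψ : Bouquet V P ar) : Prop :=
  ∀ (K : Kripke V P ar) (w : K.W) (e : V → K.D),
    K.IsVal w e → forcesL K w e Φ → forcesL K w e Ψ

/-! ## The universal Kripke structure -/

/-- The universal Kripke structure `𝔉(ψ)`: worlds are the `ψ`-consistent and
`ψ`-complete theories ordered by inclusion, the domain is `V`, and
`⟦p⟧_𝒯 = {x⃗ | p(x⃗) ∈ 𝒯}`. -/
noncomputable def universalKripke [Nonempty V] (ψ : Flower V P ar) : Kripke V P ar where
  W := {T : Set (Flower V P ar) // PsiConsistent ψ T ∧ PsiComplete ψ T}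
  D := V
  le T T' := T.1 ⊆ T'.1
  le_refl _ := subset_rfl
  le_trans := fun {_a _b _c} h h' => Set.Subset.trans h h'
  M _ := Set.univ
  M_nonempty _ := Set.univ_nonempty
  interp p T := {args | Flower.atom p args ∈ T.1}
  interp_dom _ _ _ _ _ := Set.mem_univ _
  M_mono := fun {_w _w'} _ => subset_rfl
  interp_mono := fun _ {_w _w'} h _ hf => h hf



/-! ## Auxiliary lemmas for soundness -/

section Soundness

variable {V P : Type} [DecidableEq V] {ar : P → ℕ}

lemma forcesL_append (K : Kripke V P ar) (w : K.W) (e : V → K.D)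
    (l m : List (Flower V P ar)) :
    forcesL K w e (l ++ m) ↔ (forcesL K w e l ∧ forcesL K w e m) := by
  induction l with
  | nil => simp [forcesL]
  | cons φ l ih => simp [forcesL, ih, and_assoc]

lemma forcesP_append (K : Kripke V P ar) (w : K.W) (e : V → K.D)
    (l m : List (Garden V P ar)) :
    forcesP K w e (l ++ m) ↔ (forcesP K w e l ∨ forcesP K w e m) := by
  induction l with
  | nil => simp [forcesP]
  | cons γ l ih => obtain ⟨ys, Ψ⟩ := γ; simp [forcesP, ih, or_assoc]

lemma isVal_mono (K : Kripke V P ar) {w w' : K.W} (h : K.le w w') {e : V → K.D}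
    (hv : K.IsVal w e) : K.IsVal w' e :=
  fun x => K.M_mono h (hv x)

lemma isVal_upd (K : Kripke V P ar) {w : K.W} {e e' : V → K.D} {xs : List V}
    (h1 : K.IsVal w e) (h2 : K.IsVal w e') : K.IsVal w (upd e xs e') := by
  intro x; unfold upd; split
  · exact h2 x
  · exact h1 x

lemma upd_comp_restrict {D : Type} (e e' : V → D) (σ : V → V) (xs : List V)
    (h : ∀ x, σ x ≠ x → σ x ∉ xs) :
    (upd e xs e') ∘ (restrict σ xs) = upd (e ∘ σ) xs e' := by
  funext x
  by_cases hx : x ∈ xs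
  · simp [restrict, upd, hx, Function.comp]
  · by_cases hσ : σ x = x
    · simp [restrict, upd, hx, hσ, Function.comp]
    · simp [restrict, upd, hx, h x hσ, Function.comp]

lemma upd_append_fix {D : Type} (e eb : V → D) (σ : V → V) (xs ys : List V)
    (hs : ∀ x, σ x ≠ x → x ∈ ys) :
    upd e (xs ++ ys) ((upd e xs eb) ∘ σ) = (upd e xs eb) ∘ σ := by
  funext x
  by_cases hx : x ∈ xs ++ ys
  · simp [upd, hx]
  · have hxs : x ∉ xs := fun h' => hx (List.mem_append.mpr (Or.inl h'))
    have hys : x ∉ ys := fun h' => hx (List.mem_append.mpr (Or.inr h'))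
    have hσ : σ x = x := by by_contra h'; exact hys (hs x h')
    simp [upd, hx, hσ, hxs, Function.comp]

mutual
theorem substF (K : Kripke V P ar) (w : K.W) (e : V → K.D) (σ : V → V)
    (φ : Flower V P ar) (h : ∀ x, σ x ≠ x → σ x ∉ bvF φ) :
    forcesF K w e (applyF σ φ) ↔ forcesF K w (e ∘ σ) φ := by
  cases φ with
  | atom p args => simp [applyF, forcesF, Function.comp]
  | flw γ Δ =>
    obtain ⟨xs, Φ⟩ := γ
    have hxs : ∀ x, σ x ≠ x → σ x ∉ xs := by
      intro x hx hmem
      exact h x hx (by simp [bvF, bvG, hmem])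
    have hrL : ∀ x, restrict σ xs x ≠ x → restrict σ xs x ∉ bvL Φ := by
      intro x hx hmem
      by_cases hin : x ∈ xs
      · simp [restrict, hin] at hx
      · simp only [restrict, if_neg hin] at hx hmem
        exact h x hx (by simp [bvF, bvG, hmem])
    have hrP : ∀ x, restrict σ xs x ≠ x → restrict σ xs x ∉ bvP Δ := by
      intro x hx hmem
      by_cases hin : x ∈ xs
      · simp [restrict, hin] at hx
      · simp only [restrict, if_neg hin] at hx hmem
        exact h x hx (by simp [bvF, bvG, hmem])
    simp only [applyF, forcesF]
    constructor
    · intro H w' hle e' hv hΦ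
      have key := upd_comp_restrict e e' σ xs hxs
      have hL := substL K w' (upd e xs e') (restrict σ xs) Φ hrL
      have hP := substP K w' (upd e xs e') (restrict σ xs) Δ hrP
      rw [key] at hL hP
      exact hP.mp (H w' hle e' hv (hL.mpr hΦ))
    · intro H w' hle e' hv hΦ
      have key := upd_comp_restrict e e' σ xs hxs
      have hL := substL K w' (upd e xs e') (restrict σ xs) Φ hrL
      have hP := substP K w' (upd e xs e') (restrict σ xs) Δ hrP
      rw [key] at hL hP
      exact hP.mpr (H w' hle e' hv (hL.mp hΦ))

theorem substL (K : Kripke V P ar) (w : K.W) (e : V → K.D) (σ : V → V)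
    (Φ : List (Flower V P ar)) (h : ∀ x, σ x ≠ x → σ x ∉ bvL Φ) :
    forcesL K w e (applyL σ Φ) ↔ forcesL K w (e ∘ σ) Φ := by
  cases Φ with
  | nil => simp [applyL, forcesL]
  | cons φ Φ =>
    simp only [applyL, forcesL]
    exact and_congr
      (substF K w e σ φ (fun x hx hmem => h x hx (by simp [bvL, hmem])))
      (substL K w e σ Φ (fun x hx hmem => h x hx (by simp [bvL, hmem])))

theorem substP (K : Kripke V P ar) (w : K.W) (e : V → K.D) (σ : V → V)
    (Δ : List (Garden V P ar)) (h : ∀ x, σ x ≠ x → σ x ∉ bvP Δ) :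
    forcesP K w e (applyP σ Δ) ↔ forcesP K w (e ∘ σ) Δ := by
  cases Δ with
  | nil => simp [applyP, forcesP]
  | cons γ Δ =>
    obtain ⟨ys, Ψ⟩ := γ
    have hys : ∀ x, σ x ≠ x → σ x ∉ ys := by
      intro x hx hmem
      exact h x hx (by simp [bvP, bvG, hmem])
    have hrL : ∀ x, restrict σ ys x ≠ x → restrict σ ys x ∉ bvL Ψ := by
      intro x hx hmem
      by_cases hin : x ∈ ys
      · simp [restrict, hin] at hx
      · simp only [restrict, if_neg hin] at hx hmem
        exact h x hx (by simp [bvP, bvG, hmem])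
    simp only [applyP, forcesP]
    refine or_congr (exists_congr fun e'' => and_congr_right fun _ => ?_)
      (substP K w e σ Δ (fun x hx hmem => h x hx (by simp [bvP, hmem])))
    have key := upd_comp_restrict e e'' σ ys hys
    have hL := substL K w (upd e ys e'') (restrict σ ys) Ψ hrL
    rw [key] at hL
    exact hL
end

theorem fill_mono (K : Kripke V P ar) (A B : Bouquet V P ar)
    (h : ∀ (w : K.W) (e : V → K.D), K.IsVal w e →
      forcesL K w e A → forcesL K w e B) :
    ∀ Ξ : Ctx V P ar,
      (Even Ξ.inv → ∀ (w : K.W) (e : V → K.D), K.IsVal w e →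
        forcesL K w e (Ξ.fill A) → forcesL K w e (Ξ.fill B)) ∧
      (¬ Even Ξ.inv → ∀ (w : K.W) (e : V → K.D), K.IsVal w e →
        forcesL K w e (Ξ.fill B) → forcesL K w e (Ξ.fill A)) := by
  intro Ξ
  induction Ξ with
  | hole Ψ =>
    constructor
    · intro _ w e hv hf
      rw [Ctx.fill, forcesL_append] at hf ⊢
      exact ⟨hf.1, h w e hv hf.2⟩
    · intro hneg
      exact absurd (by simp [Ctx.inv] : Even (Ctx.inv (V := V) (P := P) (ar := ar)
        (.hole Ψ))) hneg
  | pistil Ψ xs c Δ ih =>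
    have hpar : Even (Ctx.inv (Ctx.pistil Ψ xs c Δ)) ↔ ¬ Even c.inv := by
      simp only [Ctx.inv]; rw [add_comm]; exact Nat.even_add_one
    constructor
    · intro hpos w e hv hf
      rw [Ctx.fill, forcesL_append] at hf ⊢
      refine ⟨hf.1, ?_⟩
      have hfF := hf.2
      simp only [forcesL, forcesF] at hfF ⊢
      refine ⟨fun w' hle e' hv' hB => ?_, trivial⟩
      have hval' : K.IsVal w' (upd e xs e') := isVal_upd K (isVal_mono K hle hv) hv'
      exact hfF.1 w' hle e' hv' (ih.2 (hpar.mp hpos) w' (upd e xs e') hval' hB)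
    · intro hneg w e hv hf
      rw [Ctx.fill, forcesL_append] at hf ⊢
      refine ⟨hf.1, ?_⟩
      have hfF := hf.2
      simp only [forcesL, forcesF] at hfF ⊢
      refine ⟨fun w' hle e' hv' hA => ?_, trivial⟩
      have hval' : K.IsVal w' (upd e xs e') := isVal_upd K (isVal_mono K hle hv) hv'
      have hc : Even c.inv := by
        by_contra hc
        exact hneg (hpar.mpr hc)
      exact hfF.1 w' hle e' hv' (ih.1 hc w' (upd e xs e') hval' hA)
  | petal Ψ γ xs c Δ ih =>
    obtain ⟨gxs, gΦ⟩ := γ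
    have hpar : Ctx.inv (Ctx.petal Ψ (.mk gxs gΦ) xs c Δ) = c.inv := rfl
    constructor
    · intro hpos w e hv hf
      rw [Ctx.fill, forcesL_append] at hf ⊢
      refine ⟨hf.1, ?_⟩
      have hfF := hf.2
      simp only [forcesL, forcesF] at hfF ⊢
      refine ⟨fun w' hle e' hv' hg => ?_, trivial⟩
      have hp := hfF.1 w' hle e' hv' hg
      simp only [forcesP] at hp ⊢
      rcases hp with ⟨e'', hv'', hfA⟩ | hp
      · have hval : K.IsVal w' (upd (upd e gxs e') xs e'') :=
          isVal_upd K (isVal_upd K (isVal_mono K hle hv) hv') hv''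
        exact Or.inl ⟨e'', hv'', ih.1 (hpar ▸ hpos) w' _ hval hfA⟩
      · exact Or.inr hp
    · intro hneg w e hv hf
      rw [Ctx.fill, forcesL_append] at hf ⊢
      refine ⟨hf.1, ?_⟩
      have hfF := hf.2
      simp only [forcesL, forcesF] at hfF ⊢
      refine ⟨fun w' hle e' hv' hg => ?_, trivial⟩
      have hp := hfF.1 w' hle e' hv' hg
      simp only [forcesP] at hp ⊢
      rcases hp with ⟨e'', hv'', hfB⟩ | hp
      · have hval : K.IsVal w' (upd (upd e gxs e') xs e'') :=
          isVal_upd K (isVal_upd K (isVal_mono K hle hv) hv') hv''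
        exact Or.inl ⟨e'', hv'', ih.2 (hpar ▸ hneg) w' _ hval hfB⟩
      · exact Or.inr hp

lemma petals_weaken (K : Kripke V P ar) (γ : Garden V P ar)
    (Γ Δ : List (Garden V P ar)) (w : K.W) (e : V → K.D)
    (hf : forcesF K w e (.flw γ Δ)) : forcesF K w e (.flw γ (Γ ++ Δ)) := by
  obtain ⟨gxs, gΦ⟩ := γ
  simp only [forcesF] at hf ⊢
  intro w' hle e' hv' hg
  exact (forcesP_append K w' _ Γ Δ).mpr (Or.inr (hf w' hle e' hv' hg))

lemma apis_point (K : Kripke V P ar) (xs ys : List V) (Φ : List (Flower V P ar))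
    (Δ : List (Garden V P ar)) (σ : V → V)
    (hsupp : Supp σ = {x | x ∈ ys}) (hca : CaptAvoid σ [.flw (.mk [] Φ) Δ])
    (w : K.W) (e : V → K.D) (hv : K.IsVal w e)
    (hf : forcesF K w e (.flw (.mk (xs ++ ys) Φ) Δ)) :
    forcesF K w e (.flw (.mk xs (applyL σ Φ)) (applyP σ Δ)) := by
  have hcaΦ : ∀ x, σ x ≠ x → σ x ∉ bvL Φ := by
    intro x hx hmem
    exact hca x hx (by simp [bvL, bvF, bvG, hmem])
  have hcaΔ : ∀ x, σ x ≠ x → σ x ∉ bvP Δ := by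
    intro x hx hmem
    exact hca x hx (by simp [bvL, bvF, bvG, hmem])
  have hs : ∀ x, σ x ≠ x → x ∈ ys := fun x hx => (Set.ext_iff.mp hsupp x).mp hx
  simp only [forcesF] at hf ⊢
  intro w' hle e' hv' hΦσ
  have hvv : K.IsVal w' (upd e xs e') := isVal_upd K (isVal_mono K hle hv) hv'
  have hve2 : K.IsVal w' ((upd e xs e') ∘ σ) := fun x => hvv (σ x)
  have key := upd_append_fix e e' σ xs ys hs
  have h1 : forcesL K w' ((upd e xs e') ∘ σ) Φ :=
    (substL K w' (upd e xs e') σ Φ hcaΦ).mp hΦσ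
  have h2 := hf w' hle ((upd e xs e') ∘ σ) hve2
  rw [key] at h2
  exact (substP K w' (upd e xs e') σ Δ hcaΔ).mpr (h2 h1)

lemma apet_point (K : Kripke V P ar) (γ : Garden V P ar) (xs ys : List V)
    (Φ : List (Flower V P ar)) (Δ : List (Garden V P ar)) (σ : V → V)
    (hsupp : Supp σ = {x | x ∈ ys}) (hca : CaptAvoid σ Φ)
    (w : K.W) (e : V → K.D) (hv : K.IsVal w e)
    (hf : forcesF K w e (.flw γ (.mk xs (applyL σ Φ) :: Δ))) :
    forcesF K w e (.flw γ (.mk (xs ++ ys) Φ :: Δ)) := by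
  obtain ⟨gxs, gΦ⟩ := γ
  have hs : ∀ x, σ x ≠ x → x ∈ ys := fun x hx => (Set.ext_iff.mp hsupp x).mp hx
  simp only [forcesF] at hf ⊢
  intro w' hle e' hv' hg
  have hp := hf w' hle e' hv' hg
  simp only [forcesP] at hp ⊢
  rcases hp with ⟨e'', hv'', hfσ⟩ | hp
  · left
    have hvb : K.IsVal w' (upd (upd e gxs e') xs e'') :=
      isVal_upd K (isVal_upd K (isVal_mono K hle hv) hv') hv''
    refine ⟨(upd (upd e gxs e') xs e'') ∘ σ, fun x => hvb (σ x), ?_⟩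
    have key := upd_append_fix (upd e gxs e') e'' σ xs ys hs
    rw [key]
    exact (substL K w' (upd (upd e gxs e') xs e'') σ Φ hca).mp hfσ
  · exact Or.inr hp

end Soundness

/-- **Cultural soundness** (Lemma 27): if `Φ ⇝_𝒞 Ψ` is a cultural step then `Ψ ⊨ Φ`. -/
theorem cultural_soundness {V P : Type} [DecidableEq V] [Countable V] [Countable P] {ar : P → ℕ}
    (Φ Ψ : Bouquet V P ar) (h : CStep Φ Ψ) :
    SemEntails Ψ Φ := by
  cases h with
  | grow Ξ hΞ Φ' =>
    intro K w e hv hf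
    exact (fill_mono K Φ' [] (fun w e hv _ => by simp [forcesL]) Ξ).1 hΞ w e hv hf
  | crop Ξ hΞ Φ' =>
    intro K w e hv hf
    exact (fill_mono K Φ' [] (fun w e hv _ => by simp [forcesL]) Ξ).2 hΞ w e hv hf
  | pull Ξ hΞ γ Γ Δ =>
    intro K w e hv hf
    refine (fill_mono K [.flw γ Δ] [.flw γ (Γ ++ Δ)] ?_ Ξ).1 hΞ w e hv hf
    intro w e hv hfl
    simp only [forcesL] at hfl ⊢
    exact ⟨petals_weaken K γ Γ Δ w e hfl.1, trivial⟩
  | glue Ξ hΞ γ Γ Δ =>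
    intro K w e hv hf
    refine (fill_mono K [.flw γ Δ] [.flw γ (Γ ++ Δ)] ?_ Ξ).2 hΞ w e hv hf
    intro w e hv hfl
    simp only [forcesL] at hfl ⊢
    exact ⟨petals_weaken K γ Γ Δ w e hfl.1, trivial⟩
  | apis Ξ hΞ xs ys Φ' Δ σ hsupp hca =>
    intro K w e hv hf
    refine (fill_mono K [.flw (.mk (xs ++ ys) Φ') Δ]
      [.flw (.mk xs (applyL σ Φ')) (applyP σ Δ)] ?_ Ξ).1 hΞ w e hv hf
    intro w e hv hfl
    simp only [forcesL] at hfl ⊢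
    exact ⟨apis_point K xs ys Φ' Δ σ hsupp hca w e hv hfl.1, trivial⟩
  | apet Ξ hΞ γ xs ys Φ' Δ σ hsupp hca =>
    intro K w e hv hf
    refine (fill_mono K [.flw γ (.mk xs (applyL σ Φ') :: Δ)]
      [.flw γ (.mk (xs ++ ys) Φ' :: Δ)] ?_ Ξ).2 hΞ w e hv hf
    intro w e hv hfl
    simp only [forcesL] at hfl ⊢
    exact ⟨apet_point K γ xs ys Φ' Δ σ hsupp hca w e hv hfl.1, trivial⟩

end Flowers
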